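/- arXiv:2202.09991 — 5 statements merged into one kernel-verified Lean document; each statement's English description precedes it below -/
import Mathlib

section
/- For points a,b in the Euclidean plane with ‖ab‖=1, let E_{ab} be the ellipse with foci a and b whose major axis has length (1+ε), and let c,d be the endpoints of its minor axis. Then the angle ∠cad is at least 2·√ε (in radians), for 0<ε<1. -/
/-!
Since `d - a = b - c`, the angle `∠cad` is the angle between `c - a` and `b - c`, whose sum is
`b - a`; so its cosine is `2 (1 + ε)⁻² - 1 = cos (2 ∠cao)` with `sec ∠cao = 1 + ε`. The estimate
`sec x ≤ 1 + x²` on `[-1, 1]` gives `cos √ε ≥ (1 + ε)⁻¹`, hence `cos (2√ε) ≥ cos ∠cad`, and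
`cos` is decreasing on `[0, π]`.
-/

open Real InnerProductGeometry EuclideanGeometry

theorem inv_one_add_sq_le_cos {x : ℝ} (hx : |x| ≤ 1) : (1 + x ^ 2)⁻¹ ≤ cos x := by
  have hx2 : x ^ 2 ≤ 1 := by nlinarith [sq_abs x, abs_nonneg x]
  rw [inv_le_iff_one_le_mul₀ (by positivity)]
  calc 1 ≤ (1 + x ^ 2) * (1 - x ^ 2 / 2) := by nlinarith [sq_nonneg x]
    _ ≤ (1 + x ^ 2) * cos x := by gcongr; exact one_sub_sq_div_two_le_cos
    _ = cos x * (1 + x ^ 2) := mul_comm _ _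

theorem cos_angle_midpoint_reflection {V : Type*} [NormedAddCommGroup V]
    [InnerProductSpace ℝ V] {a b c : V} (hc : dist a c = dist b c) (hac : a ≠ c) :
    cos (∠ c a (midpoint ℝ a b + (midpoint ℝ a b - c))) =
      2 * (dist a b / (2 * dist a c)) ^ 2 - 1 := by
  have hd : midpoint ℝ a b + (midpoint ℝ a b - c) - a = b - c := by
    linear_combination (norm := module) midpoint_add_self ℝ a b
  have hr : dist a c ≠ 0 := dist_ne_zero.mpr hac
  have hinner : inner ℝ (c - a) (b - c) = (dist a b ^ 2 - 2 * dist a c ^ 2) / 2 := by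
    have hsq := norm_add_sq_real (c - a) (b - c)
    rw [sub_add_sub_cancel', ← dist_eq_norm, ← dist_eq_norm, ← dist_eq_norm, dist_comm c, hc,
      dist_comm b a] at hsq
    rw [hc]
    linarith
  rw [EuclideanGeometry.angle, cos_angle, vsub_eq_sub, vsub_eq_sub, hd, hinner,
    ← dist_eq_norm, ← dist_eq_norm, dist_comm c, ← hc]
  field_simp

/-- Let `a b` be points of the Euclidean plane at distance 1, let `E_{ab}` be the
ellipse with foci `a, b` and major axis of length `1+ε`, and let `c, d` be the
endpoints of its minor axis (so `‖ac‖ = ‖bc‖ = (1+ε)/2` and `d` is the reflection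
of `c` through the center, i.e. the midpoint of `ab`). Then `∠cad ≥ 2√ε`. -/
theorem minor_axis_angle (ε : ℝ) (hε0 : 0 < ε) (hε1 : ε < 1)
    (a b c d : EuclideanSpace ℝ (Fin 2)) (hab : dist a b = 1)
    (hac : dist a c = (1 + ε) / 2) (hbc : dist b c = (1 + ε) / 2)
    (hd : d = midpoint ℝ a b + (midpoint ℝ a b - c)) :
    2 * Real.sqrt ε ≤ EuclideanGeometry.angle c a d := by
  set s := √ε
  have hs : 0 ≤ s := sqrt_nonneg ε
  have hs1 : s ≤ 1 := sqrt_le_one.mpr hε1.le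
  have hcos_s : (1 + ε)⁻¹ ≤ cos s :=
    sq_sqrt hε0.le ▸ inv_one_add_sq_le_cos (abs_le.mpr ⟨by linarith, hs1⟩)
  have hac_ne : a ≠ c := dist_pos.mp (by rw [hac]; linarith)
  have hcos : cos (∠ c a d) ≤ cos (2 * s) := by
    rw [hd, cos_angle_midpoint_reflection (hac.trans hbc.symm) hac_ne, cos_two_mul, hab, hac,
      show 1 / (2 * ((1 + ε) / 2)) = (1 + ε)⁻¹ by field_simp]
    gcongr
  have hpi : 2 * s ≤ π := by linarith [pi_gt_three]
  exact (strictAntiOn_cos.le_iff_ge ⟨angle_nonneg c a d, angle_le_pi c a d⟩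
    ⟨by positivity, hpi⟩).mp hcos
end

section
/- Let G = (V,E) be an unweighted graph with girth at least 2k+2, and define a metric d_X on V by d_X(u,v) = min(d_G(u,v), 2k−1). Then every (2k−1)-spanner H = (V, E_H) of the metric space (V, d_X) (with edge weights given by d_X) has at least |E|/k edges. -/
/-- Weight of a path with respect to a (ℕ-valued) weight function on pairs. -/
def wPath {V : Type*} (d : V → V → ℕ) : List V → ℕ
  | [] => 0
  | [_] => 0
  | a :: b :: rest => d a b + wPath d (b :: rest)

/-!
Fix an edge `uv` of `G` and a spanner path from `u` to `v`; its `d_X`-weight is at most `2k-1`.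
Splitting the path at a hop `xy` and going around the edge `uv` gives `2 d_G(x,y) ≤ 2k`, so
every hop has `d_G(x,y) ≤ k`. Replacing each hop by a shortest walk of `G` gives a `u`–`v` walk
of length at most `2k-1`; unless one of these shortest walks passes through `uv`, this walk
closes a cycle of length at most `2k` with `uv`. Since the girth exceeds `2k`, a shortest walk
of length at most `k` is unique, so each edge of `H` covers at most `k` edges of `G`, and double
counting gives `|E(G)| ≤ k |E(H)|`.
-/

open Finset SimpleGraph

section wPath

variable {V : Type*} (d : V → V → ℕ)

theorem wPath_append_cons (x : V) (l₂ : List V) :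
    ∀ l₁ : List V, wPath d (l₁ ++ x :: l₂) = wPath d (l₁ ++ [x]) + wPath d (x :: l₂)
  | [] => by simp [wPath]
  | [_] => by simp [wPath]
  | a :: b :: l => by
    change d a b + wPath d ((b :: l) ++ x :: l₂) = d a b + wPath d ((b :: l) ++ [x]) + _
    rw [wPath_append_cons x l₂ (b :: l), add_assoc]

variable {d}

theorem le_wPath (hd : ∀ a, d a a = 0) (htri : ∀ a b c, d a c ≤ d a b + d b c) :
    ∀ (a b : V) (p : List V), (a :: p).getLast? = some b → d a b ≤ wPath d (a :: p)
  | a, b, [], h => by simp_all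
  | a, b, c :: p, h => by
    rw [List.getLast?_cons_cons] at h
    exact (htri a c b).trans (Nat.add_le_add_left (le_wPath hd htri c b p h) _)

end wPath

namespace SimpleGraph

variable {V : Type*} {G : SimpleGraph V}

theorem egirth_le_length_add_length {u v : V} {p q : G.Walk u v} (hp : p.IsPath)
    (hq : q.IsPath) (hne : p ≠ q) : G.egirth ≤ p.length + q.length := by
  obtain ⟨_, _, p', q', hp', hq', hcyc⟩ := hp.exists_isCycle_of_ne hq hne
  calc G.egirth ≤ (p'.append q'.reverse).length := egirth_le_length hcyc
    _ ≤ p.length + q.length := by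
      rw [Walk.length_append, Walk.length_reverse]
      exact_mod_cast Nat.add_le_add (Walk.length_le_of_isSubwalk hp')
        (Walk.length_le_of_isSubwalk hq')

theorem egirth_le_length_add_one_of_notMem_edges [DecidableEq V] {u v : V} (huv : G.Adj u v)
    (w : G.Walk u v) (hw : s(u, v) ∉ w.edges) : G.egirth ≤ w.length + 1 := by
  have hne : w.bypass ≠ Walk.cons huv .nil := by
    intro h
    exact hw (w.edges_bypass_subset_edges (by simp [h]))
  calc G.egirth ≤ w.bypass.length + (Walk.cons huv .nil).length :=
        egirth_le_length_add_length w.bypass_isPath (Walk.IsPath.mk' (by simp [huv.ne])) hne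
    _ ≤ w.length + 1 := by
      simpa using w.length_bypass_le_length

theorem Walk.eq_of_length_eq_dist {u v : V} {p q : G.Walk u v} (hp : p.length = G.dist u v)
    (hq : q.length = G.dist u v) (hg : 2 * G.dist u v < G.egirth) : p = q := by
  by_contra hne
  have h := egirth_le_length_add_length (p.isPath_of_length_eq_dist hp)
    (q.isPath_of_length_eq_dist hq) hne
  rw [hp, hq, ← two_mul] at h
  exact lt_irrefl _ (hg.trans_le h)

theorem exists_walk_length_le_wPath {d : V → V → ℕ} (w : ∀ a b, G.Walk a b) (e : Sym2 V) :
    ∀ (a b : V) (p : List V), (a :: p).getLast? = some b →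
      (a :: p).IsChain (fun x y => (w x y).length ≤ d x y ∧ e ∉ (w x y).edges) →
      ∃ W : G.Walk a b, W.length ≤ wPath d (a :: p) ∧ e ∉ W.edges
  | a, b, [], hb, _ => by
    obtain rfl : a = b := by simpa using hb
    exact ⟨.nil, by simp, by simp⟩
  | a, b, c :: p, hb, hchain => by
    rw [List.getLast?_cons_cons] at hb
    obtain ⟨⟨hlen, he⟩, hchain⟩ := List.isChain_cons_cons.mp hchain
    obtain ⟨W, hWlen, hWe⟩ := exists_walk_length_le_wPath w e c b p hb hchain
    refine ⟨(w a c).append W, ?_, by simp [he, hWe]⟩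
    simp only [Walk.length_append, wPath]
    omega

theorem two_mul_dist_le_of_append_cons_cons (hconn : G.Connected) {M : ℕ} (hM : 1 ≤ M)
    {u v x y : V} (huv : G.Adj u v) (hxy : x ≠ y) {t l₁ l₂ : List V}
    (ht : u :: t = l₁ ++ x :: y :: l₂) (hlast : (u :: t).getLast? = some v)
    (hw : wPath (fun a b => min (G.dist a b) M) (u :: t) ≤ M) :
    2 * G.dist x y ≤ M + 1 := by
  set d := fun a b => min (G.dist a b) M with hd
  have hself : ∀ a, d a a = 0 := by simp [hd]
  have htri : ∀ a b c, d a c ≤ d a b + d b c := fun a b c => by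
    have := hconn.dist_triangle (u := a) (v := b) (w := c)
    simp only [hd]
    omega
  have hsplit : wPath d (u :: t) = wPath d (l₁ ++ [x]) + d x y + wPath d (y :: l₂) := by
    rw [ht, wPath_append_cons, add_assoc]
    rfl
  have hux : d u x ≤ wPath d (l₁ ++ [x]) := by
    rcases l₁ with _ | ⟨a, l₁⟩
    · obtain ⟨rfl, -⟩ : u = x ∧ _ := by simpa using ht
      simp [hself]
    · obtain ⟨rfl, -⟩ : u = a ∧ _ := by simpa using ht
      refine le_wPath hself htri u x (l₁ ++ [x]) ?_
      rw [← List.cons_append, List.getLast?_concat]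
  have hyv : d y v ≤ wPath d (y :: l₂) :=
    le_wPath hself htri y v l₂ (by simpa [ht] using hlast)
  have h₁ := hconn.dist_triangle (u := x) (v := u) (w := v)
  have h₂ := hconn.dist_triangle (u := x) (v := v) (w := y)
  have h₃ : G.dist x y ≠ 0 := fun h => hxy (hconn.dist_eq_zero_iff.mp h)
  have h₄ : G.dist u v = 1 := dist_eq_one_iff_adj.mpr huv
  have h₅ : G.dist x u = G.dist u x := dist_comm
  have h₆ : G.dist v y = G.dist y v := dist_comm
  simp only [hd] at hsplit hux hyv hw
  -- a hop truncated at `M` would use up the whole budget, forcing `x = u` and `y = v`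
  omega

def CoveredBy (G : SimpleGraph V) (k : ℕ) (e f : Sym2 V) : Prop :=
  ∃ x y, f = s(x, y) ∧
    ∃ w : G.Walk x y, w.length = G.dist x y ∧ w.length ≤ k ∧ e ∈ w.edges

theorem card_bipartiteBelow_coveredBy_le {k : ℕ} (hg : 2 * k < G.egirth)
    [∀ e f, Decidable (G.CoveredBy k e f)] (s : Finset (Sym2 V)) (f : Sym2 V) :
    #(s.bipartiteBelow (G.CoveredBy k) f) ≤ k := by
  classical
  by_cases hf : ∃ e, G.CoveredBy k e f
  swap
  · simp_all [bipartiteBelow]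
  obtain ⟨-, x, y, rfl, w₀, hw₀, hk₀, -⟩ := hf
  have hg₀ : 2 * G.dist x y < G.egirth := by
    refine lt_of_le_of_lt ?_ hg
    rw [← hw₀]
    exact_mod_cast Nat.mul_le_mul_left 2 hk₀
  calc #(s.bipartiteBelow (G.CoveredBy k) s(x, y)) ≤ #w₀.edges.toFinset := by
        refine card_le_card fun e he => ?_
        obtain ⟨-, x', y', hxy, w, hw, -, he⟩ := (mem_bipartiteBelow _).mp he
        rw [List.mem_toFinset]
        rcases Sym2.eq_iff.mp hxy with ⟨rfl, rfl⟩ | ⟨rfl, rfl⟩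
        · rwa [← Walk.eq_of_length_eq_dist hw hw₀ hg₀]
        · have hw' : w.reverse.length = G.dist x y := by rw [Walk.length_reverse, hw, dist_comm]
          rwa [← Walk.eq_of_length_eq_dist hw' hw₀ hg₀, Walk.edges_reverse, List.mem_reverse]
    _ ≤ w₀.edges.length := List.toFinset_card_le _
    _ ≤ k := by rwa [Walk.length_edges]

theorem exists_coveredBy_of_spanner_path [DecidableEq V] {H : SimpleGraph V}
    (hconn : G.Connected) {k : ℕ} (hk : 1 ≤ k) (hg : 2 * k < G.egirth) {u v : V}
    (huv : G.Adj u v) {p : List V} (hhead : p.head? = some u) (hlast : p.getLast? = some v)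
    (hchain : p.IsChain H.Adj)
    (hw : wPath (fun a b => min (G.dist a b) (2 * k - 1)) p ≤
      (2 * k - 1) * min (G.dist u v) (2 * k - 1)) :
    ∃ f ∈ H.edgeSet, G.CoveredBy k s(u, v) f := by
  obtain ⟨t, rfl⟩ := List.head?_eq_some_iff.mp hhead
  rw [dist_eq_one_iff_adj.mpr huv, min_eq_left (by omega), mul_one] at hw
  choose sp hsp using hconn.exists_walk_length_eq_dist
  by_contra! hnot
  have hhops : (u :: t).IsChain fun x y => (sp x y).length ≤ min (G.dist x y) (2 * k - 1) ∧
      s(u, v) ∉ (sp x y).edges := by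
    refine List.isChain_iff_forall_rel_of_append_cons_cons.mpr fun {x y l₁ l₂} hsplit => ?_
    have hxy : H.Adj x y := List.isChain_iff_forall_rel_of_append_cons_cons.mp hchain hsplit
    have hdist := two_mul_dist_le_of_append_cons_cons hconn (by omega) huv hxy.ne hsplit hlast hw
    refine ⟨by rw [hsp]; omega, fun he => hnot s(x, y) hxy ?_⟩
    exact ⟨x, y, rfl, sp x y, hsp x y, by rw [hsp]; omega, he⟩
  obtain ⟨W, hWlen, hWe⟩ := exists_walk_length_le_wPath sp _ u v t hlast hhops
  have hcyc := egirth_le_length_add_one_of_notMem_edges huv W hWe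
  have : W.length + 1 ≤ 2 * k := by omega
  exact (hg.trans_le hcyc).not_ge (by exact_mod_cast this)

end SimpleGraph

/-- Let `G` be an unweighted connected graph with girth at least `2k+2`, and let
`d_X(u,v) = min(d_G(u,v), 2k−1)`. Then every `(2k−1)`-spanner `H` of the metric
space `(V, d_X)` has at least `|E(G)|/k` edges. -/
theorem spanner_girth_edge_lb {V : Type*} [Fintype V] [DecidableEq V]
    (G H : SimpleGraph V) [DecidableRel G.Adj] [DecidableRel H.Adj]
    (k : ℕ) (hk : 1 ≤ k) (hconn : G.Connected)
    (hgirth : (2 * k + 2 : ℕ∞) ≤ G.egirth)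
    (hspan : ∀ u v : V, ∃ p : List V,
      p.head? = some u ∧ p.getLast? = some v ∧ List.Chain' H.Adj p ∧
      wPath (fun a b => min (G.dist a b) (2 * k - 1)) p ≤
        (2 * k - 1) * min (G.dist u v) (2 * k - 1)) :
    G.edgeFinset.card ≤ k * H.edgeFinset.card := by
  classical
  have hg : 2 * k < G.egirth := by
    refine lt_of_lt_of_le ?_ hgirth
    exact_mod_cast (by omega : 2 * k < 2 * k + 2)
  have hcount := card_mul_le_card_mul (G.CoveredBy k) (m := 1) (n := k) (s := G.edgeFinset)
    (t := H.edgeFinset) ?_ fun f _ => card_bipartiteBelow_coveredBy_le hg _ f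
  · simpa [mul_comm] using hcount
  rintro ⟨u, v⟩ huv
  obtain ⟨p, hhead, hlast, hchain, hw⟩ := hspan u v
  obtain ⟨f, hf, hcov⟩ := exists_coveredBy_of_spanner_path hconn hk hg (mem_edgeFinset.mp huv)
    hhead hlast hchain hw
  exact one_le_card.mpr ⟨f, (mem_bipartiteAbove _).mpr ⟨mem_edgeFinset.mpr hf, hcov⟩⟩
end

section
/- Let G = (V,E) be an unweighted graph with girth at least 2k+2 and metric d_X(u,v) = min(d_G(u,v), 2k−1). Then every (2k−1)-spanner H of (V,d_X) has total weight w(H) ≥ |E|. -/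
open SimpleGraph

section wPath

variable {V : Type*} {d : V → V → ℕ}

lemma wPath_congr {d' : V → V → ℕ} :
    ∀ {p : List V}, p.IsChain (fun a b => d a b = d' a b) → wPath d p = wPath d' p
  | [], _ | [_], _ => rfl
  | a :: b :: rest, h => by
    obtain ⟨hab, h⟩ := List.isChain_cons_cons.mp h
    simp only [wPath, hab, wPath_congr h]

lemma isChain_lt_of_wPath_le {m : ℕ} :
    ∀ {p : List V}, p.IsChain (fun a b => 0 < d a b) → wPath d p ≤ m → 3 ≤ p.length →
      p.IsChain (fun a b => d a b < m)
  | a :: b :: c :: rest, hpos, hw, _ => by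
    obtain ⟨hab, hpos⟩ := List.isChain_cons_cons.mp hpos
    have hbc := (List.isChain_cons_cons.mp hpos).1
    simp only [wPath] at hw
    refine List.isChain_cons_cons.mpr ⟨by omega, ?_⟩
    rcases rest with _ | ⟨e, rest⟩
    · exact List.isChain_pair.mpr (by simp only [wPath] at hw; omega)
    · exact isChain_lt_of_wPath_le hpos (by simp only [wPath] at hw ⊢; omega) (by simp)

end wPath

namespace SimpleGraph

variable {V : Type*} {G : SimpleGraph V}

lemma isChain_dist_le_of_wPath_min_le (hconn : G.Connected) {m : ℕ} (hm : 1 ≤ m) {u v : V}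
    (huv : G.Adj u v) {p : List V} (hu : p.head? = some u) (hv : p.getLast? = some v)
    (hne : p.IsChain (· ≠ ·)) (hw : wPath (fun a b => min (G.dist a b) m) p ≤ m) :
    p.IsChain fun a b => G.dist a b ≤ m :=
  match p, hu, hv with
  | [_], hu, hv => by
    obtain rfl : _ = u := by simpa using hu
    obtain rfl : _ = v := by simpa using hv
    exact absurd rfl huv.ne
  | [_, _], hu, hv => by
    obtain rfl : _ = u := by simpa using hu
    obtain rfl : _ = v := by simpa using hv
    exact List.isChain_pair.mpr (dist_eq_one_iff_adj.mpr huv ▸ hm)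
  | _ :: _ :: _ :: _, _, _ =>
    have hpos := hne.imp fun a b hab => lt_min (hconn.pos_dist_of_ne hab) hm
    (isChain_lt_of_wPath_le hpos hw (by simp)).imp fun _ _ h => by omega

variable [DecidableEq V]

/-- Chosen once per unordered pair, so that each spanner edge `st` covers one fixed set of at most
`d_G(s, t)` edges of `G`. -/
noncomputable def geodesicEdges (hconn : G.Connected) (e : Sym2 V) : Finset (Sym2 V) :=
  (hconn.exists_walk_length_eq_dist e.out.1 e.out.2).choose.edges.toFinset

lemma exists_walk_edges_toFinset_eq_geodesicEdges (hconn : G.Connected) (s t : V) :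
    ∃ W : G.Walk s t, W.length = G.dist s t ∧
      W.edges.toFinset = geodesicEdges hconn s(s, t) := by
  have hlen := (hconn.exists_walk_length_eq_dist (s(s, t)).out.1 (s(s, t)).out.2).choose_spec
  set W₀ := (hconn.exists_walk_length_eq_dist (s(s, t)).out.1 (s(s, t)).out.2).choose
  have hout : s((s(s, t)).out.1, (s(s, t)).out.2) = s(s, t) := Quot.out_eq _
  rcases Sym2.eq_iff.mp hout with ⟨h₁, h₂⟩ | ⟨h₁, h₂⟩
  · exact ⟨W₀.copy h₁ h₂, by simp [hlen, h₁, h₂], by simp [W₀, geodesicEdges]⟩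
  · exact ⟨(W₀.copy h₁ h₂).reverse, by simp [hlen, h₁, h₂, dist_comm],
      by simp [W₀, geodesicEdges]⟩

lemma card_geodesicEdges_mk_le (hconn : G.Connected) (s t : V) :
    (geodesicEdges hconn s(s, t)).card ≤ G.dist s t := by
  obtain ⟨W, hlen, hW⟩ := exists_walk_edges_toFinset_eq_geodesicEdges hconn s t
  rw [← hW, ← hlen, ← W.length_edges]
  exact List.toFinset_card_le _

lemma exists_walk_length_eq_wPath (hconn : G.Connected) :
    ∀ {p : List V} {u v : V}, p.head? = some u → p.getLast? = some v →
      ∃ W : G.Walk u v, W.length = wPath G.dist p ∧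
        ∀ e ∈ W.edges, ∃ a b, [a, b] <:+: p ∧ e ∈ geodesicEdges hconn s(a, b)
  | [a], u, v, hu, hv => by
    obtain rfl : a = u := by simpa using hu
    obtain rfl : a = v := by simpa using hv
    exact ⟨.nil, rfl, by simp⟩
  | a :: b :: rest, u, v, hu, hv => by
    obtain rfl : a = u := by simpa using hu
    obtain ⟨W₁, hlen₁, hW₁⟩ := exists_walk_edges_toFinset_eq_geodesicEdges hconn a b
    obtain ⟨W₂, hlen₂, hW₂⟩ :=
      exists_walk_length_eq_wPath hconn (p := b :: rest) rfl (by simpa using hv)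
    refine ⟨W₁.append W₂, by simp [wPath, hlen₁, hlen₂], fun e he => ?_⟩
    rcases List.mem_append.mp (Walk.edges_append W₁ W₂ ▸ he) with he | he
    · exact ⟨a, b, (List.prefix_append [a, b] rest).isInfix, hW₁ ▸ List.mem_toFinset.mpr he⟩
    · obtain ⟨c, d, hcd, he⟩ := hW₂ e he
      exact ⟨c, d, hcd.trans (List.infix_cons (List.infix_refl _)), he⟩

/-- Adding the edge `uv` to a `v`–`u` walk avoiding it closes a cycle. -/
lemma Walk.mk_mem_edges_of_length_lt_egirth {u v : V} (huv : G.Adj u v) (W : G.Walk u v)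
    (hW : (W.length + 1 : ℕ∞) < G.egirth) : s(u, v) ∈ W.edges := by
  by_contra hnot
  let q : G.Path v u := W.reverse.toPath
  have hq : s(u, v) ∉ (q : G.Walk v u).edges := fun h =>
    hnot (by simpa using W.reverse.edges_toPath_subset_edges h)
  have hqW : (q : G.Walk v u).length ≤ W.length :=
    W.reverse.length_bypass_le_length.trans_eq W.length_reverse
  have hgirth := egirth_le_length (Path.cons_isCycle q huv hq)
  rw [Walk.length_cons] at hgirth
  exact (hgirth.trans (by exact_mod_cast Nat.succ_le_succ hqW)).not_gt hW

lemma exists_adj_mem_geodesicEdges (hconn : G.Connected) {H : SimpleGraph V} {m : ℕ}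
    (hm : 1 ≤ m) (hgirth : (m + 1 : ℕ∞) < G.egirth) {u v : V} (huv : G.Adj u v) {p : List V}
    (hu : p.head? = some u) (hv : p.getLast? = some v) (hH : p.IsChain H.Adj)
    (hw : wPath (fun a b => min (G.dist a b) m) p ≤ m) :
    ∃ a b, H.Adj a b ∧ G.dist a b ≤ m ∧ s(u, v) ∈ geodesicEdges hconn s(a, b) := by
  have hshort := isChain_dist_le_of_wPath_min_le hconn hm huv hu hv (hH.imp fun _ _ h => h.ne) hw
  obtain ⟨W, hlen, hcov⟩ := exists_walk_length_eq_wPath hconn hu hv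
  have hWm : W.length ≤ m := by
    rwa [hlen, wPath_congr (hshort.imp fun a b h => (min_eq_left h).symm)]
  have hWgirth : (W.length + 1 : ℕ∞) < G.egirth :=
    lt_of_le_of_lt (by exact_mod_cast Nat.succ_le_succ hWm) hgirth
  obtain ⟨a, b, hab, he⟩ := hcov _ (W.mk_mem_edges_of_length_lt_egirth huv hWgirth)
  exact ⟨a, b, List.isChain_pair.mp (hH.infix hab), by simpa using hshort.infix hab, he⟩

end SimpleGraph

lemma Finset.card_le_sum_of_forall_exists_mem {α β : Type*} {s : Finset β} {t : Finset α}
    {f : α → Finset β} {w : α → ℕ} (h : ∀ x ∈ s, ∃ a ∈ t, x ∈ f a ∧ (f a).card ≤ w a) :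
    s.card ≤ ∑ a ∈ t, w a := by
  classical
  set t' := t.filter fun a => (f a).card ≤ w a
  calc s.card ≤ (t'.biUnion f).card := card_le_card fun x hx => by
        obtain ⟨a, ha, hxa, hcard⟩ := h x hx
        exact mem_biUnion.mpr ⟨a, mem_filter.mpr ⟨ha, hcard⟩, hxa⟩
    _ ≤ ∑ a ∈ t', (f a).card := card_biUnion_le
    _ ≤ ∑ a ∈ t', w a := sum_le_sum fun a ha => (mem_filter.mp ha).2
    _ ≤ ∑ a ∈ t, w a := sum_le_sum_of_subset (filter_subset _ _)

/-- Let `G` be an unweighted connected graph with girth at least `2k+2`, and let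
`d_X(u,v) = min(d_G(u,v), 2k−1)`. Then every `(2k−1)`-spanner `H` of the metric
space `(V, d_X)`, with edge weights given by `d_X`, has total weight at least
`|E(G)|`. -/
theorem spanner_girth_weight_lb {V : Type*} [Fintype V]
    (G H : SimpleGraph V) [DecidableRel G.Adj] [DecidableRel H.Adj]
    (k : ℕ) (hk : 1 ≤ k) (hconn : G.Connected)
    (hgirth : (2 * k + 2 : ℕ∞) ≤ G.egirth)
    (hspan : ∀ u v : V, ∃ p : List V,
      p.head? = some u ∧ p.getLast? = some v ∧ List.Chain' H.Adj p ∧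
      wPath (fun a b => min (G.dist a b) (2 * k - 1)) p ≤
        (2 * k - 1) * min (G.dist u v) (2 * k - 1)) :
    G.edgeFinset.card ≤
      ∑ e ∈ H.edgeFinset,
        Sym2.lift ⟨fun a b => min (G.dist a b) (2 * k - 1),
          fun a b => by simp [SimpleGraph.dist_comm, Nat.min_comm]⟩ e := by
  classical
  refine Finset.card_le_sum_of_forall_exists_mem (f := geodesicEdges hconn) fun e he => ?_
  induction e using Sym2.ind with | _ u v => ?_
  have huv : G.Adj u v := mem_edgeFinset.mp he
  obtain ⟨p, hu, hv, hH, hw⟩ := hspan u v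
  rw [dist_eq_one_iff_adj.mpr huv, min_eq_left (by omega), mul_one] at hw
  have hgirth' : ((2 * k - 1 : ℕ) + 1 : ℕ∞) < G.egirth :=
    lt_of_lt_of_le (by exact_mod_cast (by omega : 2 * k - 1 + 1 < 2 * k + 2)) hgirth
  obtain ⟨a, b, hab, hdist, hmem⟩ :=
    exists_adj_mem_geodesicEdges hconn (by omega) hgirth' huv hu hv hH hw
  refine ⟨s(a, b), mem_edgeFinset.mpr hab, hmem, ?_⟩
  rw [Sym2.lift_mk]
  exact (card_geodesicEdges_mk_le hconn a b).trans_eq (min_eq_left hdist).symm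
end

section
/- Let S ⊂ ℝ^d be a finite set with at least 2 points and diam(S) ≥ 1/4, all contained in [0,1]^d. For a level ℓ > 2, let P_ℓ be a set of points of S, one from each nonempty axis-aligned grid cell of side 2^{−ℓ} of the dyadic subdivision of [0,1]^d. Then the minimum spanning tree of S has weight at least c_d · |P_ℓ| · 2^{−ℓ} for a constant c_d > 0 depending only on d. -/
/-!
Two points of `P` within distance `2^{-ℓ}` of each other lie in neighbouring dyadic cells, so
every such ball contains at most `3^d` points of `P`, and a maximal `2^{-ℓ}`-separated subset
`I ⊆ P` has at least `|P| / 3^d` points. Since `diam S ≥ 1/4`, a connected graph on `S` leaves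
each ball of radius `2^{-ℓ}/2` around a point of `I`, so the edges meeting that ball have total
length at least its radius; the balls are disjoint, so each edge is counted at most twice.
-/

open Finset

section SeparatedSubset

variable {X : Type*} [PseudoMetricSpace X]

theorem card_filter_dist_lt_le_one {r : ℝ} {I : Finset X}
    (hI : (I : Set X).Pairwise fun p q => 2 * r ≤ dist p q) (x : X) :
    #(I.filter fun c => dist x c < r) ≤ 1 := by
  refine Finset.card_le_one.2 fun a ha b hb => by_contra fun hab => ?_
  rw [mem_filter] at ha hb
  have := dist_triangle_left a b x
  linarith [hI ha.1 hb.1 hab]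

/-- A separated subset of maximal size is a net, and each ball around a point of the net holds at
most `m` points. -/
theorem exists_subset_pairwise_le_dist_card_le {δ : ℝ} (hδ : 0 < δ) {m : ℕ} (P : Finset X)
    (hP : ∀ p ∈ P, #(P.filter fun q => dist q p < δ) ≤ m) :
    ∃ I ⊆ P, (I : Set X).Pairwise (fun p q => δ ≤ dist p q) ∧ #P ≤ m * #I := by
  classical
  obtain ⟨I, hI, hmax⟩ := Finset.exists_max_image
    (P.powerset.filter fun I : Finset X => (I : Set X).Pairwise fun p q => δ ≤ dist p q) card
    ⟨∅, by simp⟩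
  rw [mem_filter, mem_powerset] at hI
  have hnet : P ⊆ I.biUnion fun i => P.filter fun q => dist q i < δ := by
    intro p hp
    by_cases hpI : p ∈ I
    · exact mem_biUnion.2 ⟨p, hpI, mem_filter.2 ⟨hp, by simpa using hδ⟩⟩
    by_contra hfar
    simp only [mem_biUnion, mem_filter, not_exists, not_and, hp, true_and, not_lt] at hfar
    have hsep : ((insert p I : Finset X) : Set X).Pairwise fun p q => δ ≤ dist p q := by
      rw [coe_insert]
      exact hI.2.insert fun i hi _ => ⟨hfar i hi, dist_comm p i ▸ hfar i hi⟩
    have := hmax (insert p I) (mem_filter.2 ⟨mem_powerset.2 (insert_subset hp hI.1), hsep⟩)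
    rw [card_insert_of_notMem hpI] at this
    omega
  refine ⟨I, hI.1, hI.2, ?_⟩
  calc #P ≤ ∑ i ∈ I, #(P.filter fun q => dist q i < δ) :=
        (card_le_card hnet).trans card_biUnion_le
    _ ≤ #I * m := sum_le_card_nsmul _ _ _ fun i hi => hP i (hI.1 hi)
    _ = m * #I := mul_comm _ _

theorem exists_lt_dist_of_two_mul_lt_diam {r : ℝ} (hr : 0 ≤ r) {s : Set X}
    (hs : 2 * r < Metric.diam s) (x : X) : ∃ y ∈ s, r < dist y x := by
  by_contra! hclose
  refine hs.not_ge (Metric.diam_le_of_forall_dist_le (by positivity) fun y hy z hz => ?_)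
  linarith [dist_triangle_right y z x, hclose y hy, hclose z hz]

end SeparatedSubset

section GridCells

variable {ι : Type*} [Fintype ι] [DecidableEq ι]

theorem Int.floor_mem_Icc_of_abs_sub_lt_one {α : Type*} [Ring α] [LinearOrder α]
    [IsStrictOrderedRing α] [FloorRing α] {x y : α} (h : |x - y| < 1) :
    ⌊x⌋ ∈ Icc (⌊y⌋ - 1) (⌊y⌋ + 1) := by
  rw [abs_sub_lt_iff] at h
  rw [mem_Icc, ← Int.floor_sub_one, ← Int.floor_add_one]
  exact ⟨Int.floor_mono (sub_lt_comm.1 h.2).le, Int.floor_mono (sub_lt_iff_lt_add'.1 h.1).le⟩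

/-- For `s = 2 ^ ℓ` this indexes the dyadic cell of level `ℓ` containing `x`. -/
noncomputable def gridCell (s : ℝ) (x : EuclideanSpace ℝ ι) : ι → ℤ :=
  fun k => ⌊x k * s⌋

theorem gridCell_mem_piFinset {s : ℝ} (hs : 0 < s) {x y : EuclideanSpace ℝ ι}
    (h : dist x y < s⁻¹) :
    gridCell s x ∈ Fintype.piFinset fun k => Icc (gridCell s y k - 1) (gridCell s y k + 1) := by
  refine Fintype.mem_piFinset.2 fun k => Int.floor_mem_Icc_of_abs_sub_lt_one ?_
  have hk : |x k - y k| < s⁻¹ := (PiLp.dist_apply_le x y k).trans_lt h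
  calc |x k * s - y k * s| = |x k - y k| * s := by rw [← sub_mul, abs_mul, abs_of_pos hs]
    _ < s⁻¹ * s := by gcongr
    _ = 1 := inv_mul_cancel₀ hs.ne'

theorem card_filter_dist_lt_le_of_injOn {s : ℝ} (hs : 0 < s) {P : Finset (EuclideanSpace ℝ ι)}
    (hP : Set.InjOn (gridCell s) (P : Set (EuclideanSpace ℝ ι))) (y : EuclideanSpace ℝ ι) :
    #(P.filter fun x => dist x y < s⁻¹) ≤ 3 ^ Fintype.card ι := by
  calc #(P.filter fun x => dist x y < s⁻¹)
      ≤ #(Fintype.piFinset fun k => Icc (gridCell s y k - 1) (gridCell s y k + 1)) :=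
        card_le_card_of_injOn (gridCell s)
          (fun x hx => gridCell_mem_piFinset hs (mem_filter.1 hx).2)
          (hP.mono fun x hx => (mem_filter.1 hx).1)
    _ = 3 ^ Fintype.card ι := by
        have h3 (k : ℤ) : (k + 1 + 1 - (k - 1)).toNat = 3 := by omega
        simp only [Fintype.card_piFinset, Int.card_Icc, h3, prod_const, card_univ]

end GridCells

section EdgeLength

variable {V X : Type*} [PseudoMetricSpace X] (f : V → X)

def edgeLength : Sym2 V → ℝ :=
  Sym2.lift ⟨fun u v => dist (f u) (f v), fun _ _ => dist_comm _ _⟩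

theorem edgeLength_mk (u v : V) : edgeLength f s(u, v) = dist (f u) (f v) := rfl

theorem edgeLength_nonneg (e : Sym2 V) : 0 ≤ edgeLength f e := by
  induction e using Sym2.ind with
  | _ u v => exact dist_nonneg

def nearEdges (c : X) (r : ℝ) : Set (Sym2 V) :=
  {e | ∃ v ∈ e, dist (f v) c < r}

variable {f}

theorem sub_dist_le_sum_indicator_nearEdges {G : SimpleGraph V} {c : X} {r : ℝ} {a b : V}
    (w : G.Walk a b) (hb : r ≤ dist (f b) c) :
    r - dist (f a) c ≤ (w.edges.map ((nearEdges f c r).indicator (edgeLength f))).sum := by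
  induction w with
  | nil => simpa using hb
  | @cons u v b _ w ih =>
    have hrest : 0 ≤ (w.edges.map ((nearEdges f c r).indicator (edgeLength f))).sum :=
      List.sum_nonneg fun x hx => by
        obtain ⟨e, -, rfl⟩ := List.mem_map.1 hx
        exact Set.indicator_nonneg (fun e _ => edgeLength_nonneg f e) e
    rw [SimpleGraph.Walk.edges_cons, List.map_cons, List.sum_cons]
    by_cases hu : dist (f u) c < r
    · have hnear : s(u, v) ∈ nearEdges f c r := ⟨u, Sym2.mem_mk_left u v, hu⟩
      rw [Set.indicator_of_mem hnear, edgeLength_mk]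
      linarith [ih hb, dist_triangle_left (f v) c (f u)]
    · have := Set.indicator_nonneg (fun e _ => edgeLength_nonneg f e) s(u, v)
        (s := nearEdges f c r)
      linarith

theorem le_sum_indicator_nearEdges [Fintype V] {G : SimpleGraph V} [DecidableRel G.Adj]
    (hG : G.Preconnected) {r : ℝ} {a b : V} (hb : r ≤ dist (f b) (f a)) :
    r ≤ ∑ e ∈ G.edgeFinset, (nearEdges f (f a) r).indicator (edgeLength f) e := by
  classical
  obtain ⟨w, hw⟩ := hG.exists_isPath a b
  calc r = r - dist (f a) (f a) := by rw [dist_self, sub_zero]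
    _ ≤ (w.edges.map ((nearEdges f (f a) r).indicator (edgeLength f))).sum :=
        sub_dist_le_sum_indicator_nearEdges w hb
    _ = ∑ e ∈ w.edges.toFinset, (nearEdges f (f a) r).indicator (edgeLength f) e :=
        (List.sum_toFinset _ hw.edges_nodup).symm
    _ ≤ _ := sum_le_sum_of_subset_of_nonneg
        (fun e he => SimpleGraph.mem_edgeFinset.2 (w.edges_subset_edgeSet (List.mem_toFinset.1 he)))
        fun e _ _ => Set.indicator_nonneg (fun e _ => edgeLength_nonneg f e) e

theorem sum_indicator_nearEdges_le {r : ℝ} {I : Finset X}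
    (hI : (I : Set X).Pairwise fun p q => 2 * r ≤ dist p q) (e : Sym2 V) :
    ∑ c ∈ I, (nearEdges f c r).indicator (edgeLength f) e ≤ 2 * edgeLength f e := by
  classical
  induction e using Sym2.ind with
  | _ u v =>
  have hsplit (c : X) : (nearEdges f c r).indicator (edgeLength f) s(u, v) ≤
      (if dist (f u) c < r then dist (f u) (f v) else 0) +
        (if dist (f v) c < r then dist (f u) (f v) else 0) := by
    by_cases hu : dist (f u) c < r <;> by_cases hv : dist (f v) c < r <;>
      simp [nearEdges, Set.indicator, hu, hv, edgeLength_mk]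
  have hone (x : V) : (∑ c ∈ I, if dist (f x) c < r then dist (f u) (f v) else 0) ≤
      dist (f u) (f v) := by
    rw [← sum_filter, sum_const, nsmul_eq_mul]
    exact mul_le_of_le_one_left dist_nonneg (by exact_mod_cast card_filter_dist_lt_le_one hI (f x))
  calc _ ≤ _ := sum_le_sum fun c _ => hsplit c
    _ = _ := sum_add_distrib
    _ ≤ dist (f u) (f v) + dist (f u) (f v) := add_le_add (hone u) (hone v)
    _ = 2 * edgeLength f s(u, v) := by rw [edgeLength_mk, two_mul]

end EdgeLength

theorem card_mul_le_two_mul_sum_edgeLength {V X : Type*} [PseudoMetricSpace X] [Fintype V]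
    {f : V → X} {G : SimpleGraph V} [DecidableRel G.Adj] (hG : G.Preconnected) {r : ℝ}
    {I : Finset X} (hIf : (I : Set X) ⊆ Set.range f)
    (hI : (I : Set X).Pairwise fun p q => 2 * r ≤ dist p q)
    (hfar : ∀ c ∈ I, ∃ b, r ≤ dist (f b) c) :
    #I * r ≤ 2 * ∑ e ∈ G.edgeFinset, edgeLength f e := by
  have hball (c) (hc : c ∈ I) :
      r ≤ ∑ e ∈ G.edgeFinset, (nearEdges f c r).indicator (edgeLength f) e := by
    obtain ⟨a, rfl⟩ := hIf hc
    obtain ⟨b, hb⟩ := hfar _ hc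
    exact le_sum_indicator_nearEdges hG hb
  calc #I * r = ∑ _c ∈ I, r := by rw [sum_const, nsmul_eq_mul]
    _ ≤ ∑ c ∈ I, ∑ e ∈ G.edgeFinset, (nearEdges f c r).indicator (edgeLength f) e :=
        sum_le_sum hball
    _ = ∑ e ∈ G.edgeFinset, ∑ c ∈ I, (nearEdges f c r).indicator (edgeLength f) e :=
        sum_comm
    _ ≤ ∑ e ∈ G.edgeFinset, 2 * edgeLength f e :=
        sum_le_sum fun e _ => sum_indicator_nearEdges_le hI e
    _ = 2 * ∑ e ∈ G.edgeFinset, edgeLength f e := (mul_sum _ _ _).symm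

theorem mst_weight_lb_general (d : ℕ) :
    ∃ c : ℝ, 0 < c ∧
      ∀ (S P : Finset (EuclideanSpace ℝ (Fin d))) (ℓ : ℕ), 2 < ℓ →
        2 ≤ S.card →
        (∀ p ∈ S, ∀ k, p k ∈ Set.Icc (0 : ℝ) 1) →
        (1 / 4 : ℝ) ≤ Metric.diam (S : Set (EuclideanSpace ℝ (Fin d))) →
        P ⊆ S →
        (∀ p ∈ P, ∀ q ∈ P, p ≠ q → ∃ k, ⌊p k * 2 ^ ℓ⌋ ≠ ⌊q k * 2 ^ ℓ⌋) →
        ∀ (T : SimpleGraph S), ∀ (_ : DecidableRel T.Adj), T.Connected →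
          c * P.card * ((2 : ℝ)⁻¹) ^ ℓ ≤
            ∑ e ∈ T.edgeFinset,
              Sym2.lift ⟨fun u v : S => dist (u : EuclideanSpace ℝ (Fin d)) v,
                fun u v => dist_comm _ _⟩ e := by
  refine ⟨(4 * 3 ^ d)⁻¹, by positivity, fun S P ℓ hℓ _ _ hdiam hPS hcell T _ hT => ?_⟩
  set δ : ℝ := (2⁻¹ : ℝ) ^ ℓ
  have hδ : 0 < δ := by positivity
  have hδ_le : δ ≤ 1 / 8 := by
    calc δ ≤ (2⁻¹ : ℝ) ^ 3 := pow_le_pow_of_le_one (by norm_num) (by norm_num) hℓ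
      _ = 1 / 8 := by norm_num
  have hinj : Set.InjOn (gridCell (2 ^ ℓ)) (P : Set (EuclideanSpace ℝ (Fin d))) :=
    fun p hp q hq hpq => by_contra fun hne =>
      (hcell p hp q hq hne).elim fun k hk => hk (congrFun hpq k)
  obtain ⟨I, hIP, hIsep, hPI⟩ := exists_subset_pairwise_le_dist_card_le hδ P fun p _ => by
    simpa [δ, inv_pow, Fintype.card_fin] using
      card_filter_dist_lt_le_of_injOn (by positivity) hinj p
  have hweight := card_mul_le_two_mul_sum_edgeLength (f := Subtype.val) hT.preconnected
    (r := δ / 2) (fun c hc => by simpa using hPS (hIP hc))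
    (by simpa only [mul_div_cancel₀ δ two_ne_zero] using hIsep)
    fun c _ => by
      obtain ⟨b, hb, hbc⟩ := exists_lt_dist_of_two_mul_lt_diam (r := δ / 2)
        (s := (S : Set (EuclideanSpace ℝ (Fin d)))) (by positivity) (by linarith) c
      exact ⟨⟨b, hb⟩, hbc.le⟩
  have hPI' : (#P : ℝ) ≤ 3 ^ d * #I := by exact_mod_cast hPI
  change _ ≤ ∑ e ∈ T.edgeFinset, edgeLength Subtype.val e
  calc (4 * 3 ^ d : ℝ)⁻¹ * #P * δ ≤ (4 * 3 ^ d : ℝ)⁻¹ * (3 ^ d * #I) * δ := by gcongr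
    _ = #I * (δ / 2) / 2 := by field_simp; ring
    _ ≤ _ := by linarith

/-- Let `S ⊂ [0,1]^d` be finite with `|S| ≥ 2` and `diam(S) ≥ 1/4`. For a level
`ℓ > 2`, let `P` consist of points of `S` lying in pairwise distinct dyadic grid
cells of side `2^{−ℓ}`. Then every spanning connected graph on `S` (in
particular the MST) has weight at least `c_d · |P| · 2^{−ℓ}` for a constant
`c_d > 0` depending only on `d`. -/
theorem mst_weight_lb (d : ℕ) (hd : 1 ≤ d) :
    ∃ c : ℝ, 0 < c ∧
      ∀ (S P : Finset (EuclideanSpace ℝ (Fin d))) (ℓ : ℕ), 2 < ℓ →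
        2 ≤ S.card →
        (∀ p ∈ S, ∀ k, p k ∈ Set.Icc (0 : ℝ) 1) →
        (1 / 4 : ℝ) ≤ Metric.diam (S : Set (EuclideanSpace ℝ (Fin d))) →
        P ⊆ S →
        (∀ p ∈ P, ∀ q ∈ P, p ≠ q → ∃ k, ⌊p k * 2 ^ ℓ⌋ ≠ ⌊q k * 2 ^ ℓ⌋) →
        ∀ (T : SimpleGraph S), ∀ (_ : DecidableRel T.Adj), T.Connected →
          c * P.card * ((2 : ℝ)⁻¹) ^ ℓ ≤
            ∑ e ∈ T.edgeFinset,
              Sym2.lift ⟨fun u v : S => dist (u : EuclideanSpace ℝ (Fin d)) v,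
                fun u v => dist_comm _ _⟩ e :=
  mst_weight_lb_general d
end

section
/- Let U be a finite ultrametric and 0 < ε < 1/2. Set κ = ⌊log_{1+ε} ε^{−1}⌋. For each i ∈ {0,…,κ}, define d_i(u,v) to be the smallest value of the form (1+ε)^i·ε^{−j} (j ∈ ℤ) that is at least d_U(u,v). Then: (a) each (X, d_i) is an ε^{−1}-HST (an ultrametric whose distinct distance values are separated by factors of at least ε^{−1}); (b) for every pair u,v there exists i ∈ {0,…,κ} with d_i(u,v) ≤ (1+ε)·d_U(u,v); and (c) for every fixed pair u,v, Σ_{i=0}^{κ} d_i(u,v) ≤ O(ε^{−2})·d_U(u,v). -/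
/-!
Rounding `d > 0` up to the grid `(1+ε)^i ε^{-ℤ}` is monotone, so it preserves the strong
triangle inequality, and grid values differ by powers of `ε⁻¹`. Write `ε⁻¹^j ≤ d < ε⁻¹^(j+1)`
and `(1+ε)^m ≤ d / ε⁻¹^j < (1+ε)^(m+1)` with `m ≤ κ`. The shift `i = m + 1` (or `i = 0` when
`m = κ`) lands within a factor `1+ε` of `d`. In the sum, the shifts `i ≤ m` are rounded to
at most `(1+ε)^i ε⁻¹^(j+1)` and the others to at most `(1+ε)^i ε⁻¹^j`; both are geometric
series of ratio `1+ε` whose largest term is `O(ε⁻¹ d)`, so each sums to `O(ε⁻² d)`.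
-/

open Classical in
/-- `dRound ε i u v` is the smallest value of the form `(1+ε)^i · ε^{−j}`
(`j ∈ ℤ`) that is at least `d(u,v)` (and `0` for `u = v`). -/
noncomputable def dRound (ε : ℝ) {X : Type*} [MetricSpace X] (i : ℕ) (u v : X) : ℝ :=
  if u = v then 0
  else (1 + ε) ^ i * (ε⁻¹) ^ (⌈Real.logb ε⁻¹ (dist u v / (1 + ε) ^ i)⌉ : ℤ)

open Finset

/-- The smallest `c * b ^ k` (`k : ℤ`) that is at least `d`, when `1 < b` and `0 < c, d`. -/
noncomputable def roundUp (b c d : ℝ) : ℝ := c * b ^ ⌈Real.logb b (d / c)⌉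

section roundUp

variable {b c d d' : ℝ}

lemma roundUp_pos (hb : 0 < b) (hc : 0 < c) : 0 < roundUp b c d :=
  mul_pos hc (zpow_pos hb _)

lemma le_roundUp (hb : 1 < b) (hc : 0 < c) (hd : 0 < d) : d ≤ roundUp b c d := by
  have hlog := (Real.logb_le_iff_le_rpow hb (div_pos hd hc)).1 (Int.le_ceil _)
  rw [Real.rpow_intCast, div_le_iff₀ hc, mul_comm] at hlog
  exact hlog

lemma roundUp_le (hb : 1 < b) (hc : 0 < c) (hd : 0 < d) {k : ℤ} (h : d ≤ c * b ^ k) :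
    roundUp b c d ≤ c * b ^ k := by
  have hlog : Real.logb b (d / c) ≤ k := by
    rw [Real.logb_le_iff_le_rpow hb (div_pos hd hc), Real.rpow_intCast, div_le_iff₀ hc, mul_comm]
    exact h
  exact mul_le_mul_of_nonneg_left (zpow_le_zpow_right₀ hb.le (Int.ceil_le.2 hlog)) hc.le

lemma roundUp_mono (hb : 1 < b) (hc : 0 < c) (hd : 0 < d) (h : d ≤ d') :
    roundUp b c d ≤ roundUp b c d' :=
  roundUp_le hb hc hd (h.trans (le_roundUp hb hc (hd.trans_le h)))

lemma mul_roundUp_le_of_lt (hb : 1 < b) (hc : 0 < c) (h : roundUp b c d < roundUp b c d') :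
    b * roundUp b c d ≤ roundUp b c d' := by
  have hk := (zpow_lt_zpow_iff_right₀ hb).1 (lt_of_mul_lt_mul_left h hc.le)
  calc b * roundUp b c d = c * b ^ (⌈Real.logb b (d / c)⌉ + 1) := by
        rw [roundUp, zpow_add_one₀ (by positivity)]; ring
    _ ≤ roundUp b c d' := mul_le_mul_of_nonneg_left (zpow_le_zpow_right₀ hb.le hk) hc.le

end roundUp

lemma pow_natFloor_logb_le {a b : ℝ} (ha : 1 < a) (hb : 1 ≤ b) : a ^ ⌊Real.logb a b⌋₊ ≤ b := by
  rw [← Real.rpow_natCast, ← Real.le_logb_iff_rpow_le ha (by linarith)]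
  exact Nat.floor_le (Real.logb_nonneg ha hb)

lemma lt_pow_natFloor_logb_add_one {a b : ℝ} (ha : 1 < a) (hb : 0 < b) :
    b < a ^ (⌊Real.logb a b⌋₊ + 1) := by
  rw [← Real.rpow_natCast, ← Real.logb_lt_iff_lt_rpow ha hb, Nat.cast_add_one]
  exact Nat.lt_floor_add_one _

lemma geom_sum_mul_le {a x : ℝ} (ha : 1 < a) (hx : 0 ≤ x) (n : ℕ) :
    ∑ i ∈ range n, a ^ i * x ≤ a ^ n / (a - 1) * x := by
  rw [← sum_mul, geom_sum_eq ha.ne']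
  gcongr
  linarith

section grid

variable {a b d : ℝ} {κ : ℕ}

lemma exists_grid_bracket (ha : 1 < a) (hb : 1 < b) (hκ_lt : b < a ^ (κ + 1)) (hd : 0 < d) :
    ∃ j : ℤ, ∃ m ≤ κ, d < b ^ (j + 1) ∧ a ^ m * b ^ j ≤ d ∧ d < a ^ (m + 1) * b ^ j := by
  obtain ⟨j, hjd, hdj⟩ := exists_mem_Ico_zpow hd hb
  have hbj : 0 < b ^ j := zpow_pos (by linarith) j
  obtain ⟨m, hmd, hdm⟩ := exists_nat_pow_near ((one_le_div hbj).2 hjd) ha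
  rw [le_div_iff₀ hbj] at hmd
  rw [div_lt_iff₀ hbj] at hdm
  have hm : a ^ m < a ^ (κ + 1) := by
    refine lt_trans ?_ hκ_lt
    rw [zpow_add_one₀ (by positivity), mul_comm _ b] at hdj
    exact lt_of_mul_lt_mul_right (hmd.trans_lt hdj) hbj.le
  exact ⟨j, m, Nat.lt_succ_iff.1 ((pow_lt_pow_iff_right₀ ha).1 hm), hdj, hmd, hdm⟩

lemma exists_roundUp_pow_le (ha : 1 < a) (hb : 1 < b) (hκ_lt : b < a ^ (κ + 1)) (hd : 0 < d) :
    ∃ i ≤ κ, roundUp b (a ^ i) d ≤ a * d := by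
  obtain ⟨j, m, hmκ, hdj, hmd, hdm⟩ := exists_grid_bracket ha hb hκ_lt hd
  rcases hmκ.lt_or_eq with hlt | rfl
  · refine ⟨m + 1, hlt, ?_⟩
    calc roundUp b (a ^ (m + 1)) d ≤ a ^ (m + 1) * b ^ j := roundUp_le hb (by positivity) hd hdm.le
      _ = a * (a ^ m * b ^ j) := by ring
      _ ≤ a * d := by gcongr
  · refine ⟨0, Nat.zero_le _, ?_⟩
    calc roundUp b (a ^ 0) d ≤ a ^ 0 * b ^ (j + 1) :=
          roundUp_le hb (by positivity) hd (by simpa using hdj.le)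
      _ = b * b ^ j := by rw [zpow_add_one₀ (by positivity)]; ring
      _ ≤ a ^ (m + 1) * b ^ j := by gcongr
      _ = a * (a ^ m * b ^ j) := by ring
      _ ≤ a * d := by gcongr

lemma sum_roundUp_pow_le (ha : 1 < a) (hb : 1 < b) (hκ_le : a ^ κ ≤ b) (hκ_lt : b < a ^ (κ + 1))
    (hd : 0 < d) : ∑ i ∈ range (κ + 1), roundUp b (a ^ i) d ≤ 2 * a * b / (a - 1) * d := by
  obtain ⟨j, m, hmκ, hdj, hmd, hdm⟩ := exists_grid_bracket ha hb hκ_lt hd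
  have hbj : 0 < b ^ j := zpow_pos (by linarith) j
  have hlow : ∑ i ∈ range (m + 1), roundUp b (a ^ i) d ≤ a * b / (a - 1) * d :=
    calc ∑ i ∈ range (m + 1), roundUp b (a ^ i) d
        ≤ ∑ i ∈ range (m + 1), a ^ i * b ^ (j + 1) := by
          refine sum_le_sum fun i _ => roundUp_le hb (by positivity) hd ?_
          exact hdj.le.trans (le_mul_of_one_le_left (by positivity) (one_le_pow₀ ha.le))
      _ ≤ a ^ (m + 1) / (a - 1) * b ^ (j + 1) := geom_sum_mul_le ha (by positivity) _
      _ = a * b / (a - 1) * (a ^ m * b ^ j) := by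
          rw [zpow_add_one₀ (by positivity)]; ring
      _ ≤ a * b / (a - 1) * d := by gcongr
  have hhigh : ∑ i ∈ Ico (m + 1) (κ + 1), roundUp b (a ^ i) d ≤ a * b / (a - 1) * d :=
    calc ∑ i ∈ Ico (m + 1) (κ + 1), roundUp b (a ^ i) d
        ≤ ∑ i ∈ Ico (m + 1) (κ + 1), a ^ i * b ^ j := by
          refine sum_le_sum fun i hi => roundUp_le hb (by positivity) hd ?_
          exact hdm.le.trans (by gcongr; exacts [ha.le, (mem_Ico.1 hi).1])
      _ ≤ ∑ i ∈ range (κ + 1), a ^ i * b ^ j :=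
          sum_le_sum_of_subset_of_nonneg
            (range_eq_Ico (κ + 1) ▸ Ico_subset_Ico_left (Nat.zero_le _)) fun _ _ _ => by positivity
      _ ≤ a ^ (κ + 1) / (a - 1) * b ^ j := geom_sum_mul_le ha hbj.le _
      _ = a / (a - 1) * a ^ κ * b ^ j := by ring
      _ ≤ a / (a - 1) * b * d := by
          gcongr
          exact (le_mul_of_one_le_left hbj.le (one_le_pow₀ ha.le)).trans hmd
      _ = a * b / (a - 1) * d := by ring
  calc ∑ i ∈ range (κ + 1), roundUp b (a ^ i) d
      = ∑ i ∈ range (m + 1), roundUp b (a ^ i) d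
        + ∑ i ∈ Ico (m + 1) (κ + 1), roundUp b (a ^ i) d :=
        (sum_range_add_sum_Ico _ (by omega)).symm
    _ ≤ 2 * a * b / (a - 1) * d := (add_le_add hlow hhigh).trans_eq (by ring)

end grid

section dRound

variable {ε : ℝ} {X : Type*} [MetricSpace X] {i : ℕ}

lemma dRound_of_ne {u v : X} (h : u ≠ v) :
    dRound ε i u v = roundUp ε⁻¹ ((1 + ε) ^ i) (dist u v) :=
  if_neg h

lemma dRound_self (u : X) : dRound ε i u u = 0 :=
  if_pos rfl

lemma dRound_comm (u v : X) : dRound ε i u v = dRound ε i v u := by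
  rcases eq_or_ne u v with rfl | h
  · rfl
  · rw [dRound_of_ne h, dRound_of_ne h.symm, dist_comm]

lemma dRound_pos (hε : 0 < ε) {u v : X} (h : u ≠ v) : 0 < dRound ε i u v := by
  rw [dRound_of_ne h]
  exact roundUp_pos (inv_pos.2 hε) (by positivity)

lemma dRound_eq_zero (hε : 0 < ε) {u v : X} : dRound ε i u v = 0 ↔ u = v :=
  ⟨fun h => by_contra fun hne => (dRound_pos hε hne).ne' h, fun h => h ▸ dRound_self u⟩

lemma dRound_le_dRound (hε : 0 < ε) (hε1 : ε < 1) {u v x y : X} (h : dist u v ≤ dist x y) :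
    dRound ε i u v ≤ dRound ε i x y := by
  rcases eq_or_ne u v with rfl | huv
  · rw [dRound_self]
    rcases eq_or_ne x y with rfl | hxy
    exacts [(dRound_self x).ge, (dRound_pos hε hxy).le]
  · have hxy : x ≠ y := dist_pos.1 ((dist_pos.2 huv).trans_le h)
    rw [dRound_of_ne huv, dRound_of_ne hxy]
    exact roundUp_mono ((one_lt_inv₀ hε).2 hε1) (by positivity) (dist_pos.2 huv) h

lemma dRound_le_max [IsUltrametricDist X] (hε : 0 < ε) (hε1 : ε < 1) (x y z : X) :
    dRound ε i x z ≤ max (dRound ε i x y) (dRound ε i y z) := by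
  rcases le_max_iff.1 (dist_triangle_max x y z) with h | h
  · exact le_max_of_le_left (dRound_le_dRound hε hε1 h)
  · exact le_max_of_le_right (dRound_le_dRound hε hε1 h)

lemma inv_mul_dRound_le_of_lt (hε : 0 < ε) (hε1 : ε < 1) {u v x y : X}
    (hpos : 0 < dRound ε i u v) (h : dRound ε i u v < dRound ε i x y) :
    ε⁻¹ * dRound ε i u v ≤ dRound ε i x y := by
  have huv : u ≠ v := fun e => hpos.ne' ((dRound_eq_zero hε).2 e)
  have hxy : x ≠ y := fun e => (hpos.trans h).ne' ((dRound_eq_zero hε).2 e)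
  rw [dRound_of_ne huv, dRound_of_ne hxy] at h ⊢
  exact mul_roundUp_le_of_lt ((one_lt_inv₀ hε).2 hε1) (by positivity) h

end dRound

/-- Let `(X, d_U)` be an ultrametric, `0 < ε < 1/2`, and
`κ = ⌊log_{1+ε} ε⁻¹⌋`. For `i ∈ {0, …, κ}`, let `d_i(u,v)` be the smallest value
`(1+ε)^i·ε^{−j}` (`j ∈ ℤ`) at least `d_U(u,v)`. Then (a) each `(X, d_i)` is an
`ε⁻¹`-HST (an ultrametric whose distinct positive distances are separated by
factors of at least `ε⁻¹`); (b) for every `u ≠ v` some `i ≤ κ` has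
`d_i(u,v) ≤ (1+ε)·d_U(u,v)`; and (c) `Σ_{i=0}^{κ} d_i(u,v) ≤ O(ε⁻²)·d_U(u,v)`. -/
theorem ultrametric_hst_decomposition :
    ∃ C : ℝ, 0 < C ∧
      ∀ (X : Type) [inst : MetricSpace X],
        (∀ x y z : X, dist x z ≤ max (dist x y) (dist y z)) →
        ∀ ε : ℝ, 0 < ε → ε < 1 / 2 →
          (∀ i ≤ Nat.floor (Real.logb (1 + ε) ε⁻¹),
            (∀ u v : X, dRound ε i u v = dRound ε i v u) ∧
            (∀ u v : X, dRound ε i u v = 0 ↔ u = v) ∧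
            (∀ x y z : X,
              dRound ε i x z ≤ max (dRound ε i x y) (dRound ε i y z)) ∧
            (∀ u v x y : X, 0 < dRound ε i u v →
              dRound ε i u v < dRound ε i x y →
              ε⁻¹ * dRound ε i u v ≤ dRound ε i x y)) ∧
          (∀ u v : X, u ≠ v →
            ∃ i ≤ Nat.floor (Real.logb (1 + ε) ε⁻¹),
              dRound ε i u v ≤ (1 + ε) * dist u v) ∧
          (∀ u v : X,
            ∑ i ∈ Finset.range (Nat.floor (Real.logb (1 + ε) ε⁻¹) + 1),
              dRound ε i u v ≤ C / ε ^ 2 * dist u v) := by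
  refine ⟨3, by norm_num, fun X _ hultra ε hε hε2 => ?_⟩
  have : IsUltrametricDist X := ⟨hultra⟩
  have hε1 : ε < 1 := by linarith
  have ha : 1 < 1 + ε := by linarith
  have hb : 1 < ε⁻¹ := (one_lt_inv₀ hε).2 hε1
  have hκ_le := pow_natFloor_logb_le ha hb.le
  have hκ_lt := lt_pow_natFloor_logb_add_one ha (inv_pos.2 hε)
  refine ⟨fun i _ => ⟨dRound_comm, fun _ _ => dRound_eq_zero hε, dRound_le_max hε hε1,
    fun _ _ _ _ => inv_mul_dRound_le_of_lt hε hε1⟩, fun u v huv => ?_, fun u v => ?_⟩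
  · obtain ⟨i, hi, h⟩ := exists_roundUp_pow_le ha hb hκ_lt (dist_pos.2 huv)
    exact ⟨i, hi, (dRound_of_ne huv).trans_le h⟩
  rcases eq_or_ne u v with rfl | huv
  · simp [dRound_self]
  calc ∑ i ∈ range (⌊Real.logb (1 + ε) ε⁻¹⌋₊ + 1), dRound ε i u v
      = ∑ i ∈ range (⌊Real.logb (1 + ε) ε⁻¹⌋₊ + 1), roundUp ε⁻¹ ((1 + ε) ^ i) (dist u v) :=
        sum_congr rfl fun _ _ => dRound_of_ne huv
    _ ≤ 2 * (1 + ε) * ε⁻¹ / (1 + ε - 1) * dist u v :=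
        sum_roundUp_pow_le ha hb hκ_le hκ_lt (dist_pos.2 huv)
    _ = 2 * (1 + ε) / ε ^ 2 * dist u v := by rw [add_sub_cancel_left]; field_simp
    _ ≤ 3 / ε ^ 2 * dist u v := by gcongr; linarith
end
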